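/- arXiv:1610.06103 — 3 statements merged into one kernel-verified Lean document; each statement's English description precedes it below -/
import Mathlib

section
/- For the nonholonomic particle, the hamiltonian vector field of the horizontal gauge momentum J = p_x/√(1+y²) with respect to the nonholonomic bracket is vertical: π_nh^♯(dJ) = (1/√(1+y²))·(∂_x + y∂_z), which is tangent to the orbits of the R²-action by translations in x and z. -/
open Real

/-- The 2-section `Ω_M` of the nonholonomic particle at the point
`m = (x, y, z, p_x, p_y)`, evaluated on tangent vectors `u, v ∈ ℝ⁵` (coordinates indexed
`0 = x, 1 = y, 2 = z, 3 = p_x, 4 = p_y`); this is `−dΘ_M` for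
`Θ_M = (p_x/(1+y²)) dx + p_y dy + (y p_x/(1+y²)) dz`. -/
noncomputable def OmegaM (m u v : Fin 5 → ℝ) : ℝ :=
  (1 / (1 + (m 1) ^ 2)) * (u 0 * v 3 - u 3 * v 0)
    - (2 * m 1 * m 3 / (1 + (m 1) ^ 2) ^ 2) * (u 0 * v 1 - u 1 * v 0)
    + (u 1 * v 4 - u 4 * v 1)
    + (m 1 / (1 + (m 1) ^ 2)) * (u 2 * v 3 - u 3 * v 2)
    + (m 3 * (1 - (m 1) ^ 2) / (1 + (m 1) ^ 2) ^ 2) * (u 2 * v 1 - u 1 * v 2)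

/-- The differential of `J = p_x/√(1+y²)` at `m`, applied to `w`. -/
noncomputable def dJpart (m w : Fin 5 → ℝ) : ℝ :=
  (1 / Real.sqrt (1 + (m 1) ^ 2)) * w 3
    - (m 1 * m 3 / ((1 + (m 1) ^ 2) * Real.sqrt (1 + (m 1) ^ 2))) * w 1

/-- The constraint distribution `C = span{X_x = ∂_x + y∂_z, ∂_y, ∂_{p_x}, ∂_{p_y}}` at `m`. -/
noncomputable def Cdist (m : Fin 5 → ℝ) : Submodule ℝ (Fin 5 → ℝ) :=
  Submodule.span ℝ
    ({![1, 0, m 1, 0, 0], ![0, 1, 0, 0, 0], ![0, 0, 0, 1, 0], ![0, 0, 0, 0, 1]} :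
      Set (Fin 5 → ℝ))

/-- The vertical space of the `ℝ²`-action (translations in `x` and `z`):
`V = span{∂_x, ∂_z}`. -/
noncomputable def Vdist : Submodule ℝ (Fin 5 → ℝ) :=
  Submodule.span ℝ ({![1, 0, 0, 0, 0], ![0, 0, 1, 0, 0]} : Set (Fin 5 → ℝ))

/-- The candidate hamiltonian vector field `(1/√(1+y²))·(∂_x + y∂_z)`. -/
noncomputable def Yfield (m : Fin 5 → ℝ) : Fin 5 → ℝ :=
  (1 / Real.sqrt (1 + (m 1) ^ 2)) • ![1, 0, m 1, 0, 0]

/-- for the nonholonomic particle, the hamiltonian vector field of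
`J = p_x/√(1+y²)` with respect to the nonholonomic bracket (characterized by
`i_Y Ω_M|_C = dJ|_C`, `Y ∈ C`) is `Y = (1/√(1+y²))(∂_x + y∂_z)`, and it is vertical:
it is tangent to the orbits of the `ℝ²`-action by translations in `x` and `z`. -/
theorem stmt_7 (m : Fin 5 → ℝ) :
    Yfield m ∈ Cdist m ∧
    (∀ w ∈ Cdist m, OmegaM m (Yfield m) w = dJpart m w) ∧
    Yfield m ∈ Vdist := by
  have hpos : (0:ℝ) < 1 + (m 1) ^ 2 := by positivity
  have hs : Real.sqrt (1 + (m 1) ^ 2) ^ 2 = 1 + (m 1) ^ 2 :=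
    Real.sq_sqrt hpos.le
  have hsne : Real.sqrt (1 + (m 1) ^ 2) ≠ 0 := by positivity
  have hne : (1 + (m 1) ^ 2) ≠ 0 := hpos.ne'
  refine ⟨?_, ?_, ?_⟩
  · exact Submodule.smul_mem _ _ (Submodule.subset_span (by simp))
  · intro w _
    simp only [OmegaM, dJpart, Yfield, Pi.smul_apply, Matrix.cons_val_zero,
      Matrix.cons_val_one, Matrix.head_cons, Matrix.cons_val_two, Matrix.tail_cons,
      Matrix.cons_val_three, Matrix.cons_val_four, smul_eq_mul]
    field_simp
    ring_nf
  · have : Yfield m = (1 / Real.sqrt (1 + (m 1) ^ 2)) • ![1, 0, 0, 0, 0]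
        + (m 1 / Real.sqrt (1 + (m 1) ^ 2)) • ![0, 0, 1, 0, 0] := by
      funext i
      fin_cases i <;> simp [Yfield] <;> ring
    rw [this]
    exact Submodule.add_mem _
      (Submodule.smul_mem _ _ (Submodule.subset_span (by simp)))
      (Submodule.smul_mem _ _ (Submodule.subset_span (by simp)))
end

section
/- Under the hypotheses of a dynamical gauge transformation, if J ∈ C∞(M) is such that the vector field χ_M (tangent to group orbits) satisfies i_{χ_M} Ω_M|_C = (dJ − Λ)|_C and the 2-form B satisfies i_{χ_M} B|_C = Λ|_C, then π_B^♯(dJ) = −χ_M. If moreover B and J are G-invariant, then the induced function J̄ on M̄ = M/G is a Casimir of the reduced bracket {·,·}_red^B, i.e. {f, J̄}_red^B = 0 for all f ∈ C∞(M̄). -/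
/-- Theorem 2.14 of the paper, in pointwise form over the constraint
manifold `M` with model tangent fiber `E`: if the vertical vector field `χ_M` satisfies
`i_{χ_M} Ω_M|_C = (dJ − Λ)|_C` and the gauge 2-form satisfies `i_{χ_M} B|_C = Λ|_C`,
then `π_B^♯(dJ) = −χ_M` (the `(Ω+B)`-hamiltonian vector field of `J` is `χ_M`, which is
vertical); consequently, for every `G`-invariant function `f` (whose differential
annihilates the vertical spaces `V`), `{f, J}_B = ∓ df(χ_M) = 0`: the induced function
`J̄` is a Casimir of the reduced bracket. -/
theorem stmt_9 {M : Type*} {E : Type*} [AddCommGroup E] [Module ℝ E]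
    (Ω B : M → E →ₗ[ℝ] E →ₗ[ℝ] ℝ)
    (C V : M → Submodule ℝ E)
    (χ : M → E) (dJ Λ : M → E →ₗ[ℝ] ℝ)
    (hχC : ∀ m, χ m ∈ C m)
    (hvert : ∀ m, χ m ∈ V m)
    (hnd : ∀ m, ∀ v ∈ C m, (∀ w ∈ C m, Ω m v w + B m v w = 0) → v = 0)
    (h1 : ∀ m, ∀ w ∈ C m, Ω m (χ m) w = dJ m w - Λ m w)
    (h2 : ∀ m, ∀ w ∈ C m, B m (χ m) w = Λ m w) :
    (∀ m, ∀ Y ∈ C m, (∀ w ∈ C m, Ω m Y w + B m Y w = dJ m w) → Y = χ m) ∧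
    (∀ df : M → E →ₗ[ℝ] ℝ, (∀ m, ∀ v ∈ V m, df m v = 0) → ∀ m, df m (χ m) = 0) := by
  constructor
  · intro m Y hY hham
    have h := hnd m (Y - χ m) (Submodule.sub_mem _ hY (hχC m)) ?_
    · exact sub_eq_zero.mp h
    · intro w hw
      have := hham w hw
      have := h1 m w hw
      have := h2 m w hw
      simp only [map_sub, LinearMap.sub_apply]
      linarith
  · intro df hdf m
    exact hdf m (χ m) (hvert m)
end

section
/- The G = S¹ × E(2) action on Q = SO(3) × R² for the rolling body of revolution is not free: at any configuration (g,a) whose attitude matrix g has third row γ = (0,0,±1), the infinitesimal generators satisfy (1;0,0)_Q(q) = ∓(0;1,0)_Q(q), so the isotropy is nontrivial. -/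
open Real Matrix

/-- Rotation by angle `φ` about the axis `e₃`. -/
noncomputable def hmat (φ : ℝ) : Matrix (Fin 3) (Fin 3) ℝ :=
  !![Real.cos φ, -Real.sin φ, 0; Real.sin φ, Real.cos φ, 0; 0, 0, 1]

/-- The planar rotation `h̄_φ`. -/
noncomputable def hbar (φ : ℝ) : Matrix (Fin 2) (Fin 2) ℝ :=
  !![Real.cos φ, -Real.sin φ; Real.sin φ, Real.cos φ]

/-- `SO(3)` as the set of special orthogonal `3 × 3` matrices. -/
def SO3 : Set (Matrix (Fin 3) (Fin 3) ℝ) := {g | g.transpose * g = 1 ∧ g.det = 1}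

/-- The left `E(2)`-action on `SO(3) × ℝ²`. -/
noncomputable def actE2 (φ : ℝ) (u : Fin 2 → ℝ)
    (q : Matrix (Fin 3) (Fin 3) ℝ × (Fin 2 → ℝ)) :
    Matrix (Fin 3) (Fin 3) ℝ × (Fin 2 → ℝ) :=
  (hmat φ * q.1, (hbar φ).mulVec q.2 + u)

/-- The right `S¹`-action on `SO(3) × ℝ²`. -/
noncomputable def actS1 (θ : ℝ) (q : Matrix (Fin 3) (Fin 3) ℝ × (Fin 2 → ℝ)) :
    Matrix (Fin 3) (Fin 3) ℝ × (Fin 2 → ℝ) :=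
  (q.1 * hmat (-θ), (hbar θ).mulVec q.2)

/-- the `G = S¹ × E(2)` action on `Q = SO(3) × ℝ²` is not free: at any
configuration `(g, a)` whose attitude matrix `g` has third row `γ = (0,0,±1)`, there is a
nontrivial group element (with `h_θ ≠ 1`) fixing `(g, a)`. -/
theorem stmt_13 (g : Matrix (Fin 3) (Fin 3) ℝ) (a : Fin 2 → ℝ)
    (hg : g ∈ SO3)
    (hrow : g 2 = ![0, 0, 1] ∨ g 2 = ![0, 0, -1]) :
    ∃ (θ φ : ℝ) (u : Fin 2 → ℝ),
      hmat θ ≠ 1 ∧ actE2 φ u (actS1 θ (g, a)) = (g, a) := by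
  -- third-column entries vanish
  have h20 : g 2 0 = 0 := by rcases hrow with h | h <;> simp [h]
  have h21 : g 2 1 = 0 := by rcases hrow with h | h <;> simp [h]
  have h22 : g 2 2 = 1 ∨ g 2 2 = -1 := by rcases hrow with h | h <;> simp [h]
  have hcol := congrFun (congrFun hg.1 2) 2
  simp [Matrix.mul_apply, Fin.sum_univ_three, Matrix.transpose_apply,
    Matrix.one_apply] at hcol
  have hsq : g 0 2 ^ 2 + g 1 2 ^ 2 = 0 := by
    rcases h22 with h | h <;> nlinarith [hcol]
  have h02 : g 0 2 = 0 := by nlinarith [sq_nonneg (g 0 2), sq_nonneg (g 1 2)]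
  have h12 : g 1 2 = 0 := by nlinarith [sq_nonneg (g 0 2), sq_nonneg (g 1 2)]
  refine ⟨π, π, 0, ?_, ?_⟩
  · intro h
    have := congrFun (congrFun h 0) 0
    simp [hmat, Matrix.one_apply] at this
    linarith [this]
  · rw [Prod.ext_iff]
    constructor
    · ext i j
      fin_cases i <;> fin_cases j <;>
        simp [actE2, actS1, hmat, Matrix.mul_apply, Matrix.vecMul,
          dotProduct, Fin.sum_univ_three, h20, h21, h02, h12] <;>
        simp [Matrix.vecHead, Matrix.vecTail]
    · funext i
      fin_cases i <;>
        simp [actE2, actS1, hbar, Matrix.mulVec, dotProduct,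
          Fin.sum_univ_two]
end
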